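/- arXiv:1112.0708 — 2 statements merged into one kernel-verified Lean document; each statement's English description precedes it below -/
import Mathlib

section
/- Let p_X be a probability measure on ℝ, X ~ p_X, and assume H(⌊X⌋) < ∞. If p_X = (1−ε)·ν_d + ε·ν̃ for some ε ∈ [0,1], where ν_d is a discrete probability measure (i.e., with countable support), then d̄(p_X) ≤ ε. If in addition ν̃ is absolutely continuous with respect to Lebesgue measure, then d̲(p_X) = d̄(p_X) = ε. In particular, if P(X ≠ 0) ≤ ε then d̄(p_X) ≤ ε. -/
open MeasureTheory ProbabilityTheory Filter BoundedContinuousFunction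
open scoped ENNReal NNReal

namespace DJM

/-- The standard Gaussian measure `N(0,1)` on `ℝ`. -/
noncomputable def stdGauss : Measure ℝ := gaussianReal 0 1

/-- The minimum mean square error for estimating `X ~ p` from the observation
`√s · X + Z`, `Z ~ N(0,1)` independent of `X`. -/
noncomputable def mmseReal (p : Measure ℝ) (s : ℝ) : ℝ :=
  ⨅ η : {f : ℝ → ℝ // Measurable f},
    ∫ q : ℝ × ℝ, (q.1 - η.1 (Real.sqrt s * q.1 + q.2)) ^ 2 ∂(p.prod stdGauss)

/-- `mmse` as a function on the extended signal-to-noise ratio, with `mmse ∞ = 0`. -/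
noncomputable def mmse (p : Measure ℝ) (s : ℝ≥0∞) : ℝ≥0∞ :=
  if s = ⊤ then 0 else ENNReal.ofReal (mmseReal p s.toReal)

/-- Shannon entropy of a (discrete) measure on `ℤ`. -/
noncomputable def shannonEntropy (μ : Measure ℤ) : ℝ≥0∞ :=
  ∑' i : ℤ, ENNReal.ofReal (Real.negMulLog (μ {i}).toReal)

/-- Upper Rényi information dimension: `limsup_ℓ H(⌊ℓX⌋)/(log ℓ)`. -/
noncomputable def infoDimUpper (p : Measure ℝ) : ℝ :=
  limsup (fun ℓ : ℕ => (shannonEntropy (p.map (fun x => ⌊(ℓ : ℝ) * x⌋))).toReal / Real.log ℓ) atTop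

/-- Lower Rényi information dimension. -/
noncomputable def infoDimLower (p : Measure ℝ) : ℝ :=
  liminf (fun ℓ : ℕ => (shannonEntropy (p.map (fun x => ⌊(ℓ : ℝ) * x⌋))).toReal / Real.log ℓ) atTop

/-- Upper MMSE dimension: `limsup_{s→∞} s · mmse(s)`. -/
noncomputable def mmseDimUpper (p : Measure ℝ) : ℝ := limsup (fun s : ℝ => s * mmseReal p s) atTop

/-- Lower MMSE dimension. -/
noncomputable def mmseDimLower (p : Measure ℝ) : ℝ := liminf (fun s : ℝ => s * mmseReal p s) atTop

/-- KL divergence (expressed via the Radon–Nikodym derivative). -/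
noncomputable def klDivReal {α : Type*} [MeasurableSpace α] (μ ν : Measure α) : ℝ :=
  ∫ a, Real.log (μ.rnDeriv ν a).toReal ∂μ

/-- Mutual information `I(s) = I(X ; √s X + Z)` for `X ~ p`, `Z ~ N(0,1)` independent:
the KL divergence between the joint law of `(X, √s X + Z)` and the product of marginals. -/
noncomputable def mutualInfoI (p : Measure ℝ) (s : ℝ) : ℝ :=
  klDivReal
    ((p.prod stdGauss).map (fun q : ℝ × ℝ => (q.1, Real.sqrt s * q.1 + q.2)))
    (p.prod ((p.prod stdGauss).map (fun q : ℝ × ℝ => Real.sqrt s * q.1 + q.2)))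

/-- The posterior-mean (Bayes optimal) denoiser for the prior `p` at signal-to-noise
ratio `s`: `η(v) = E[X | X + s^{-1/2} Z = v] = E[X e^{-s(v-X)²/2}]/E[e^{-s(v-X)²/2}]`. -/
noncomputable def postMean (p : Measure ℝ) (s : ℝ) (v : ℝ) : ℝ :=
  (∫ a, a * Real.exp (-(s * (v - a) ^ 2) / 2) ∂p) /
    (∫ a, Real.exp (-(s * (v - a) ^ 2) / 2) ∂p)

/-- Kolmogorov–Smirnov distance between two measures on `ℝ`. -/
noncomputable def ksDist (p q : Measure ℝ) : ℝ :=
  ⨆ z : ℝ, |(p (Set.Iic z)).toReal - (q (Set.Iic z)).toReal|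

/-- `|a - b|` in the extended nonnegative reals. -/
noncomputable def ediff (a b : ℝ≥0∞) : ℝ≥0∞ := (a - b) + (b - a)

section SE

variable {R C : Type*} [Fintype R] [Fintype C]

/-- The state evolution map `T''`: `φ_a = σ² + (1/δ) Σ_i W_{a,i} ψ_i`. -/
noncomputable def seφOf (W : R → C → ℝ≥0) (δ σ2 : ℝ) (ψ : C → ℝ≥0∞) (a : R) : ℝ≥0∞ :=
  ENNReal.ofReal σ2 + (ENNReal.ofReal δ)⁻¹ * ∑ i, (W a i : ℝ≥0∞) * ψ i

/-- The state evolution map `T'`: `ψ_i = mmse(Σ_b W_{b,i} φ_b⁻¹)`. -/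
noncomputable def seψOf (p : Measure ℝ) (W : R → C → ℝ≥0) (φ : R → ℝ≥0∞) (i : C) : ℝ≥0∞ :=
  mmse p (∑ b, (W b i : ℝ≥0∞) * (φ b)⁻¹)

/-- The state evolution sequence `ψ(t)` with initial condition `ψ0`. -/
noncomputable def seψ (p : Measure ℝ) (W : R → C → ℝ≥0) (δ σ2 : ℝ) (ψ0 : C → ℝ≥0∞) :
    ℕ → C → ℝ≥0∞
  | 0 => ψ0
  | t + 1 => seψOf p W (seφOf W δ σ2 (seψ p W δ σ2 ψ0 t))

/-- The state evolution sequence `φ(t)`. -/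
noncomputable def seφ (p : Measure ℝ) (W : R → C → ℝ≥0) (δ σ2 : ℝ) (ψ0 : C → ℝ≥0∞)
    (t : ℕ) : R → ℝ≥0∞ :=
  seφOf W δ σ2 (seψ p W δ σ2 ψ0 t)

/-- The initial condition `ψ_i(0) = ∞`. -/
noncomputable def seInit : C → ℝ≥0∞ := fun _ => ⊤

end SE

/-- A shape function: `C¹`, supported in `[-1,1]`, even, nonnegative, unit integral. -/
structure IsShapeFunction (𝒲 : ℝ → ℝ) : Prop where
  nonneg : ∀ x, 0 ≤ 𝒲 x
  smooth : ContDiff ℝ 1 𝒲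
  supp : ∀ x, 1 < |x| → 𝒲 x = 0
  even : ∀ x, 𝒲 (-x) = 𝒲 x
  normalized : ∫ x, 𝒲 x = 1

/-- Row index set of the spatially coupled matrix `W(L, L0, 𝒲, ρ)`, with `ρ = 1/k`:
`Sum.inl a` is the row `a - k ∈ {-ρ⁻¹, …, L-1+ρ⁻¹}` of `R₀`, and `Sum.inr (i, b)` is the
`b`-th row of the block `R_{i - 2k}`, `i - 2k ∈ {-2ρ⁻¹, …, -1}`, of size `L0`. -/
abbrev RIdx (L L0 k : ℕ) := Fin (L + 2 * k) ⊕ Fin (2 * k) × Fin L0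

/-- Column index set: `j` stands for the column `j - 2k ∈ {-2ρ⁻¹, …, L-1}`. -/
abbrev CIdx (L k : ℕ) := Fin (L + 2 * k)

/-- The spatially coupled matrix `W = W(L, L0, 𝒲, ρ)`, `ρ = 1/k`:
`W_{a,i} = ρ 𝒲(ρ(a-i))` for `a ∈ R₀`, and `W_{a,i} = 1` iff `a ∈ R_i` on the
oversampling blocks. -/
noncomputable def scW (𝒲 : ℝ → ℝ) (L L0 k : ℕ) : RIdx L L0 k → CIdx L k → ℝ≥0
  | Sum.inl a, j =>
      Real.toNNReal ((k : ℝ)⁻¹ * 𝒲 ((k : ℝ)⁻¹ * (((a : ℝ) - k) - ((j : ℝ) - 2 * k))))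
  | Sum.inr ib, j => if (j : ℕ) = (ib.1 : ℕ) then 1 else 0

/-- `mmse(L0/(2σ²))`, the boundary value used in the modified/continuum state evolution. -/
noncomputable def mmseFloor (p : Measure ℝ) (σ2 : ℝ) (L0 : ℕ) : ℝ≥0∞ :=
  mmse p (ENNReal.ofReal ((L0 : ℝ) / (2 * σ2)))

/-- The kernel `W_{a-i} = ρ 𝒲(ρ(a-i))`, `ρ = 1/k`, as a function of the real difference. -/
noncomputable def wker (𝒲 : ℝ → ℝ) (k : ℕ) (d : ℝ) : ℝ≥0 :=
  Real.toNNReal ((k : ℝ)⁻¹ * 𝒲 ((k : ℝ)⁻¹ * d))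

/-- Extension of a vector `ψ : Fin L → ℝ≥0∞` to `ℤ` by `mmse(L0/(2σ²))` on the left and
`∞` on the right. -/
noncomputable def modψext (p : Measure ℝ) (σ2 : ℝ) (L0 L : ℕ) (ψ : Fin L → ℝ≥0∞) (i : ℤ) :
    ℝ≥0∞ :=
  if h0 : i < 0 then mmseFloor p σ2 L0
  else if h : i < (L : ℤ) then ψ ⟨i.toNat, by omega⟩ else ⊤

/-- The modified state evolution map `F''`. -/
noncomputable def modF'' (𝒲 : ℝ → ℝ) (p : Measure ℝ) (δ σ2 : ℝ) (L0 L k : ℕ)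
    (ψ : Fin L → ℝ≥0∞) (a : Fin (L + 2 * k)) : ℝ≥0∞ :=
  ENNReal.ofReal σ2 + (ENNReal.ofReal δ)⁻¹ *
    ∑' i : ℤ, (wker 𝒲 k (((a : ℝ) - k) - i) : ℝ≥0∞) * modψext p σ2 L0 L ψ i

/-- The modified state evolution map `F'`. -/
noncomputable def modF' (𝒲 : ℝ → ℝ) (p : Measure ℝ) (L _L0 k : ℕ)
    (φ : Fin (L + 2 * k) → ℝ≥0∞) (i : Fin L) : ℝ≥0∞ :=
  mmse p (∑ b : Fin (L + 2 * k), (wker 𝒲 k (((b : ℝ) - k) - i) : ℝ≥0∞) * (φ b)⁻¹)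

/-- The modified state evolution sequence `ψ^mod(t)`. -/
noncomputable def modψseq (𝒲 : ℝ → ℝ) (p : Measure ℝ) (δ σ2 : ℝ) (L0 L k : ℕ) :
    ℕ → Fin L → ℝ≥0∞
  | 0 => fun _ => ⊤
  | t + 1 => modF' 𝒲 p L L0 k (modF'' 𝒲 p δ σ2 L0 L k (modψseq 𝒲 p δ σ2 L0 L k t))

/-- The modified state evolution sequence `φ^mod(t)`. -/
noncomputable def modφseq (𝒲 : ℝ → ℝ) (p : Measure ℝ) (δ σ2 : ℝ) (L0 L k : ℕ) (t : ℕ) :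
    Fin (L + 2 * k) → ℝ≥0∞ :=
  modF'' 𝒲 p δ σ2 L0 L k (modψseq 𝒲 p δ σ2 L0 L k t)

/-- Extension of `ψ : ℝ → ℝ≥0∞` beyond `[0,ℓ]` by `mmse(L0/(2σ²))` on the left and `∞`
on the right. -/
noncomputable def contψext (p : Measure ℝ) (σ2 : ℝ) (L0 : ℕ) (ℓ : ℝ) (ψ : ℝ → ℝ≥0∞)
    (x : ℝ) : ℝ≥0∞ :=
  if x < 0 then mmseFloor p σ2 L0 else if x ≤ ℓ then ψ x else ⊤

/-- The continuum state evolution map `F''`: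
`F''(ψ)(y) = σ² + (1/δ) ∫ 𝒲(y-x) ψ(x) dx`. -/
noncomputable def contF'' (𝒲 : ℝ → ℝ) (p : Measure ℝ) (δ σ2 : ℝ) (L0 : ℕ) (ℓ : ℝ)
    (ψ : ℝ → ℝ≥0∞) (y : ℝ) : ℝ≥0∞ :=
  ENNReal.ofReal σ2 + (ENNReal.ofReal δ)⁻¹ *
    ∫⁻ x, ENNReal.ofReal (𝒲 (y - x)) * contψext p σ2 L0 ℓ ψ x

/-- The continuum state evolution map `F'`:
`F'(φ)(x) = mmse(∫_{-1}^{ℓ+1} 𝒲(x-z) φ(z)⁻¹ dz)`. -/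
noncomputable def contF' (𝒲 : ℝ → ℝ) (p : Measure ℝ) (ℓ : ℝ) (φ : ℝ → ℝ≥0∞) (x : ℝ) :
    ℝ≥0∞ :=
  mmse p (∫⁻ z in Set.Icc (-1 : ℝ) (ℓ + 1), ENNReal.ofReal (𝒲 (x - z)) * (φ z)⁻¹)

/-- The continuum state evolution sequence `ψ(·;t)`. -/
noncomputable def contψseq (𝒲 : ℝ → ℝ) (p : Measure ℝ) (δ σ2 : ℝ) (L0 : ℕ) (ℓ : ℝ) :
    ℕ → ℝ → ℝ≥0∞
  | 0 => fun _ => ⊤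
  | t + 1 => contF' 𝒲 p ℓ (contF'' 𝒲 p δ σ2 L0 ℓ (contψseq 𝒲 p δ σ2 L0 ℓ t))

/-- The continuum state evolution sequence `φ(·;t)`. -/
noncomputable def contφseq (𝒲 : ℝ → ℝ) (p : Measure ℝ) (δ σ2 : ℝ) (L0 : ℕ) (ℓ : ℝ)
    (t : ℕ) : ℝ → ℝ≥0∞ :=
  contF'' 𝒲 p δ σ2 L0 ℓ (contψseq 𝒲 p δ σ2 L0 ℓ t)

end DJM

open DJM

/-!
Upper bound. Write `p = μ + ν` with `μ` carried by a finite set `F` and `ν(ℝ) ≤ a`. Entropy is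
subadditive in the measure, the quantization of `μ` takes at most `|F|` values, and grouping the
cells of length `1/ℓ` into unit cells gives `H(⌊ℓY⌋) ≤ H(⌊Y⌋) + ν(ℝ) log ℓ` for the part `Y ~ ν`,
where `H(⌊Y⌋) ≤ H(⌊X⌋) + 1` because `ν ≤ p`. Hence `H(⌊ℓX⌋) ≤ C + a log ℓ`. A countably supported
`μ` is approximated by finitely supported ones, at the price of an arbitrarily small `a`.

Lower bound. If `μ ≤ p` has density at most `K`, then a cell of length `1/ℓ` of `p`-mass `a`
carries `μ`-mass `c ≤ K/ℓ`, and `-a log a ≥ c log (ℓ/K) + c - a`. Summing over the cells gives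
`H(⌊ℓX⌋) ≥ μ(ℝ) log ℓ - O(1)`. Truncating the density of the absolutely continuous part at larger
and larger levels gives such `μ` of mass tending to `ε`.
-/

open Set Filter Topology

namespace Real

lemma negMulLog_add_le {a b : ℝ} (ha : 0 ≤ a) (hb : 0 ≤ b) :
    negMulLog (a + b) ≤ negMulLog a + negMulLog b := by
  rcases ha.eq_or_lt with rfl | ha
  · simp
  rcases hb.eq_or_lt with rfl | hb
  · simp
  have hla := log_le_log ha (le_add_of_nonneg_right hb.le)
  have hlb := log_le_log hb (le_add_of_nonneg_left ha.le)
  simp only [negMulLog]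
  nlinarith

lemma negMulLog_le_one {x : ℝ} (hx : 0 ≤ x) : negMulLog x ≤ 1 := by
  linarith [negMulLog_le_one_sub_self hx]

lemma negMulLog_le_negMulLog_add {a b : ℝ} (ha : 0 ≤ a) (hab : a ≤ b) (hb : b ≤ 1) :
    negMulLog a ≤ negMulLog b + b := by
  rcases (ha.trans hab).eq_or_lt with rfl | hb0
  · rw [le_antisymm hab ha]
    simp
  obtain ⟨t, ht0, ht1, rfl⟩ : ∃ t, 0 ≤ t ∧ t ≤ 1 ∧ a = t * b :=
    ⟨a / b, by positivity, div_le_one_of_le₀ hab hb0.le, (div_mul_cancel₀ a hb0.ne').symm⟩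
  rw [negMulLog_mul]
  nlinarith [negMulLog_le_one ht0, negMulLog_nonneg hb0.le hb]

/-- `log y ≤ y - 1` at `y = q / (n c)`; summed over `n` values `c` of total `q`, this is
Jensen's inequality `sum_negMulLog_le`. -/
lemma negMulLog_le_mul_log_div_add_div_sub {c q n : ℝ} (hc : 0 ≤ c) (hq : 0 < q) (hn : 0 < n) :
    negMulLog c ≤ c * log (n / q) + q / n - c := by
  rcases hc.eq_or_lt with rfl | hc
  · simp only [negMulLog_zero, zero_mul, zero_add, sub_zero]
    positivity
  have h := log_le_sub_one_of_pos (show 0 < q / (n * c) by positivity)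
  rw [log_div hq.ne' (by positivity), log_mul hn.ne' hc.ne'] at h
  have : c * (q / (n * c)) = q / n := by field_simp
  rw [log_div hn.ne' hq.ne']
  simp only [negMulLog]
  nlinarith

lemma sum_negMulLog_le {ι : Type*} (s : Finset ι) (c : ι → ℝ) (hc : ∀ i ∈ s, 0 ≤ c i) :
    ∑ i ∈ s, negMulLog (c i) ≤ negMulLog (∑ i ∈ s, c i) + (∑ i ∈ s, c i) * log s.card := by
  set q := ∑ i ∈ s, c i
  rcases (Finset.sum_nonneg hc).eq_or_lt with hq | hq
  · have hzero := (Finset.sum_eq_zero_iff_of_nonneg hc).1 hq.symm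
    rw [show q = 0 from hq.symm, Finset.sum_congr rfl fun i hi => by rw [hzero i hi]]
    simp
  have hn : (0 : ℝ) < s.card := by
    obtain ⟨i, hi⟩ := Finset.nonempty_of_sum_ne_zero hq.ne'
    exact_mod_cast Finset.card_pos.2 ⟨i, hi⟩
  calc ∑ i ∈ s, negMulLog (c i)
      ≤ ∑ i ∈ s, (c i * log (s.card / q) + q / s.card - c i) :=
        Finset.sum_le_sum fun i hi => negMulLog_le_mul_log_div_add_div_sub (hc i hi) hq hn
    _ = negMulLog q + q * log s.card := by
        rw [log_div hn.ne' hq.ne']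
        simp only [Finset.sum_sub_distrib, Finset.sum_add_distrib, ← Finset.sum_mul,
          Finset.sum_const, nsmul_eq_mul, negMulLog]
        field_simp
        ring

lemma mul_log_inv_add_sub_le_negMulLog {a c β : ℝ} (hc : 0 ≤ c) (hca : c ≤ a) (ha : a ≤ 1)
    (hcβ : c ≤ β) : c * log β⁻¹ + (c - a) ≤ negMulLog a := by
  rcases hc.eq_or_lt with rfl | hc
  · simp only [zero_mul, zero_sub, zero_add]
    linarith [negMulLog_nonneg hca ha]
  have ha0 := hc.trans_le hca
  have h1 := one_sub_inv_le_log_of_pos (show 0 < c / a by positivity)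
  rw [log_div hc.ne' ha0.ne', inv_div] at h1
  have h2 := log_le_log hc hcβ
  have h3 := log_nonpos ha0.le ha
  have : c * (a / c) = a := by field_simp
  simp only [negMulLog, log_inv]
  nlinarith

end Real

open Real

lemma ENNReal.sum_ofReal_negMulLog_le {ι : Type*} (s : Finset ι) {w : ι → ℝ≥0∞}
    (hw : ∀ i ∈ s, w i ≤ 1) :
    ∑ i ∈ s, ENNReal.ofReal (negMulLog (w i).toReal) ≤
      ENNReal.ofReal (negMulLog (∑ i ∈ s, w i).toReal) +
        (∑ i ∈ s, w i) * ENNReal.ofReal (Real.log s.card) := by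
  have hw_ne_top : ∀ i ∈ s, w i ≠ ⊤ := fun i hi => ne_top_of_le_ne_top ENNReal.one_ne_top (hw i hi)
  have hsum_ne_top : ∑ i ∈ s, w i ≠ ⊤ := ENNReal.sum_ne_top.2 hw_ne_top
  rw [← ENNReal.ofReal_sum_of_nonneg fun i hi => negMulLog_nonneg ENNReal.toReal_nonneg
    (ENNReal.toReal_le_of_le_ofReal zero_le_one (ENNReal.ofReal_one ▸ hw i hi))]
  calc ENNReal.ofReal (∑ i ∈ s, negMulLog (w i).toReal)
      ≤ ENNReal.ofReal (negMulLog (∑ i ∈ s, w i).toReal +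
          (∑ i ∈ s, w i).toReal * Real.log s.card) := by
        rw [ENNReal.toReal_sum hw_ne_top]
        exact ENNReal.ofReal_le_ofReal (sum_negMulLog_le s _ fun i _ => ENNReal.toReal_nonneg)
    _ ≤ _ := by
        refine ENNReal.ofReal_add_le.trans_eq ?_
        rw [ENNReal.ofReal_mul ENNReal.toReal_nonneg, ENNReal.ofReal_toReal hsum_ne_top]

namespace MeasureTheory

variable {α : Type*} [MeasurableSpace α]

lemma toReal_measure_le_one {μ : Measure α} (hμ : μ univ ≤ 1) (s : Set α) :
    (μ s).toReal ≤ 1 :=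
  ENNReal.toReal_le_of_le_ofReal zero_le_one
    (ENNReal.ofReal_one ▸ (measure_mono (subset_univ s)).trans hμ)

section Countable

variable [Countable α] [MeasurableSingletonClass α]

lemma tsum_measure_singleton (μ : Measure α) : ∑' x, μ {x} = μ univ := by
  simpa using μ.tsum_indicator_apply_singleton univ MeasurableSet.univ

lemma hasSum_toReal_measure_singleton (μ : Measure α) [IsFiniteMeasure μ] :
    HasSum (fun x => (μ {x}).toReal) (μ univ).toReal := by
  have h := ENNReal.hasSum_toReal (f := fun x => μ {x})
    (by rw [tsum_measure_singleton]; exact measure_ne_top μ _)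
  rwa [← ENNReal.tsum_toReal_eq fun x => measure_ne_top μ _, tsum_measure_singleton] at h

end Countable

lemma exists_finset_measure_compl_lt [MeasurableSingletonClass α] [Nonempty α] {μ : Measure α}
    [IsFiniteMeasure μ] {S : Set α} (hS : S.Countable) (hμS : μ Sᶜ = 0) {δ : ℝ≥0∞}
    (hδ : 0 < δ) : ∃ F : Finset α, μ (↑F)ᶜ < δ := by
  classical
  obtain ⟨g, hg⟩ := countable_iff_exists_subset_range.1 hS
  set F : ℕ → Finset α := fun n => (Finset.range n).image g
  have hsub : (⋂ n, (↑(F n) : Set α)ᶜ) ⊆ Sᶜ := fun x hx hxS => by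
    obtain ⟨k, rfl⟩ := hg hxS
    exact mem_iInter.1 hx (k + 1) (Finset.mem_image_of_mem g (Finset.self_mem_range_succ k))
  have hlim := tendsto_measure_iInter_atTop (μ := μ) (s := fun n => (↑(F n) : Set α)ᶜ)
    (fun n => (F n).measurableSet.compl.nullMeasurableSet)
    (fun m n hmn => compl_subset_compl.2 (Finset.coe_subset.2
      (Finset.image_subset_image (Finset.range_subset_range.2 hmn))))
    ⟨0, measure_ne_top μ _⟩
  rw [measure_mono_null hsub hμS] at hlim
  obtain ⟨n, hn⟩ := (hlim.eventually (gt_mem_nhds hδ)).exists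
  exact ⟨F n, hn⟩

lemma tendsto_measure_setOf_rnDeriv_le {ν μ : Measure α} [IsFiniteMeasure ν] (hνμ : ν ≪ μ) :
    Tendsto (fun n : ℕ => ν {x | ν.rnDeriv μ x ≤ n}) atTop (𝓝 (ν univ)) := by
  have h := tendsto_measure_iUnion_atTop (μ := ν) (s := fun n : ℕ => {x | ν.rnDeriv μ x ≤ n})
    fun m n hmn x (hx : ν.rnDeriv μ x ≤ m) =>
      show ν.rnDeriv μ x ≤ n from hx.trans (Nat.cast_le.2 hmn)
  have hsub : (⋃ n : ℕ, {x | ν.rnDeriv μ x ≤ n})ᶜ ⊆ {x | ¬ ν.rnDeriv μ x < ⊤} :=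
    fun x hx hlt => hx <| mem_iUnion.2 <|
      (ENNReal.exists_nat_gt (lt_top_iff_ne_top.1 hlt)).imp fun _ hn => hn.le
  have hnull := measure_mono_null hsub (hνμ (ae_iff.1 (ν.rnDeriv_lt_top μ)))
  rwa [measure_congr (ae_eq_univ.2 hnull)] at h

lemma restrict_setOf_rnDeriv_le_le_smul {ν μ : Measure α} [ν.HaveLebesgueDecomposition μ]
    [SFinite μ] (hνμ : ν ≪ μ) (c : ℝ≥0∞) : ν.restrict {x | ν.rnDeriv μ x ≤ c} ≤ c • μ := by
  refine Measure.le_iff.2 fun s hs => ?_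
  rw [Measure.restrict_apply hs, ← Measure.setLIntegral_rnDeriv hνμ, Measure.smul_apply,
    smul_eq_mul]
  calc ∫⁻ x in s ∩ {x | ν.rnDeriv μ x ≤ c}, ν.rnDeriv μ x ∂μ
      ≤ ∫⁻ _ in s ∩ {x | ν.rnDeriv μ x ≤ c}, c ∂μ :=
        setLIntegral_mono measurable_const fun x hx => hx.2
    _ ≤ c * μ s := by
        rw [setLIntegral_const]
        gcongr
        exact inter_subset_left

end MeasureTheory

namespace DJM

lemma shannonEntropy_add_le (μ ν : Measure ℤ) [IsFiniteMeasure μ] [IsFiniteMeasure ν] :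
    shannonEntropy (μ + ν) ≤ shannonEntropy μ + shannonEntropy ν := by
  rw [shannonEntropy, shannonEntropy, shannonEntropy, ← ENNReal.tsum_add]
  refine ENNReal.tsum_le_tsum fun i => ?_
  rw [Measure.add_apply, ENNReal.toReal_add (measure_ne_top _ _) (measure_ne_top _ _)]
  exact (ENNReal.ofReal_le_ofReal (negMulLog_add_le ENNReal.toReal_nonneg
    ENNReal.toReal_nonneg)).trans ENNReal.ofReal_add_le

lemma shannonEntropy_le_card {μ : Measure ℤ} {T : Finset ℤ} (hT : μ (↑T)ᶜ = 0) :
    shannonEntropy μ ≤ T.card := by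
  rw [shannonEntropy, tsum_eq_sum (s := T) fun i hi => ?_]
  · calc ∑ i ∈ T, ENNReal.ofReal (negMulLog (μ {i}).toReal) ≤ ∑ _i ∈ T, 1 :=
          Finset.sum_le_sum fun i _ =>
            ENNReal.ofReal_le_one.2 (negMulLog_le_one ENNReal.toReal_nonneg)
      _ = T.card := by simp
  · rw [measure_mono_null (singleton_subset_iff.2 hi) hT]
    simp

lemma shannonEntropy_le_add_of_le {μ P : Measure ℤ} (hμP : μ ≤ P) (hP : P univ ≤ 1) :
    shannonEntropy μ ≤ shannonEntropy P + P univ := by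
  rw [shannonEntropy, shannonEntropy, ← tsum_measure_singleton P, ← ENNReal.tsum_add]
  refine ENNReal.tsum_le_tsum fun i => ?_
  have hPi : P {i} ≠ ⊤ :=
    ne_top_of_le_ne_top ENNReal.one_ne_top ((measure_mono (subset_univ _)).trans hP)
  calc ENNReal.ofReal (negMulLog (μ {i}).toReal)
      ≤ ENNReal.ofReal (negMulLog (P {i}).toReal + (P {i}).toReal) :=
        ENNReal.ofReal_le_ofReal (negMulLog_le_negMulLog_add ENNReal.toReal_nonneg
          (ENNReal.toReal_mono hPi (hμP _)) (toReal_measure_le_one hP _))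
    _ ≤ _ := ENNReal.ofReal_add_le.trans_eq (by rw [ENNReal.ofReal_toReal hPi])

lemma measure_map_ediv_singleton (μ : Measure ℤ) (ℓ : ℕ) [NeZero ℓ] (m : ℤ) :
    μ.map (· / (ℓ : ℤ)) {m} = ∑ t : Fin ℓ, μ {(Int.divModEquiv ℓ).symm (m, t)} := by
  have hfiber : (· / (ℓ : ℤ)) ⁻¹' {m} =
      ↑(Finset.univ.image fun t : Fin ℓ => (Int.divModEquiv ℓ).symm (m, t)) := by
    ext j
    simp only [mem_preimage, mem_singleton_iff, Finset.coe_image, Finset.coe_univ, image_univ,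
      mem_range, Equiv.symm_apply_eq, Prod.ext_iff, Int.divModEquiv_apply]
    exact ⟨fun h => ⟨_, h.symm, rfl⟩, fun ⟨_, h, _⟩ => h.symm⟩
  rw [Measure.map_apply measurable_from_top (measurableSet_singleton m), hfiber,
    ← sum_measure_singleton, Finset.sum_image fun s _ t _ h =>
      Prod.mk_right_injective m ((Int.divModEquiv ℓ).symm.injective h)]

/-- `Y` is determined by `Y / ℓ` and one of `ℓ` residues. -/
lemma shannonEntropy_le_map_ediv_add {μ : Measure ℤ} (hμ : μ univ ≤ 1) (ℓ : ℕ) [NeZero ℓ] :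
    shannonEntropy μ ≤
      shannonEntropy (μ.map (· / (ℓ : ℤ))) + μ univ * ENNReal.ofReal (log ℓ) := by
  have hle : ∀ j, μ {j} ≤ 1 := fun j => (measure_mono (subset_univ _)).trans hμ
  calc shannonEntropy μ
      = ∑' m, ∑ t : Fin ℓ,
          ENNReal.ofReal (negMulLog (μ {(Int.divModEquiv ℓ).symm (m, t)}).toReal) := by
        rw [shannonEntropy, ← (Int.divModEquiv ℓ).symm.tsum_eq, ENNReal.tsum_prod']
        simp only [tsum_fintype]
    _ ≤ ∑' m, (ENNReal.ofReal (negMulLog (μ.map (· / (ℓ : ℤ)) {m}).toReal) +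
          μ.map (· / (ℓ : ℤ)) {m} * ENNReal.ofReal (log ℓ)) := by
        refine ENNReal.tsum_le_tsum fun m => ?_
        simpa [measure_map_ediv_singleton] using
          ENNReal.sum_ofReal_negMulLog_le Finset.univ fun t _ =>
            hle ((Int.divModEquiv ℓ).symm (m, t))
    _ = _ := by
        rw [ENNReal.tsum_add, ENNReal.tsum_mul_right, tsum_measure_singleton,
          Measure.map_apply measurable_from_top MeasurableSet.univ, preimage_univ]
        rfl

lemma hasSum_negMulLog_toReal_shannonEntropy {P : Measure ℤ} (hP : P univ ≤ 1)
    (h : shannonEntropy P ≠ ⊤) :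
    HasSum (fun i => negMulLog (P {i}).toReal) (shannonEntropy P).toReal := by
  have hnonneg : ∀ i, 0 ≤ negMulLog (P {i}).toReal := fun i =>
    negMulLog_nonneg ENNReal.toReal_nonneg (toReal_measure_le_one hP _)
  have h' := ENNReal.hasSum_toReal h
  rw [← ENNReal.tsum_toReal_eq fun _ => ENNReal.ofReal_ne_top] at h'
  simpa [shannonEntropy, ENNReal.toReal_ofReal (hnonneg _)] using h'

lemma mul_log_inv_add_sub_le_shannonEntropy {P Q : Measure ℤ} [IsProbabilityMeasure P]
    (hP : shannonEntropy P ≠ ⊤) (hQP : Q ≤ P) {β : ℝ} (hQβ : ∀ i, (Q {i}).toReal ≤ β) :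
    (Q univ).toReal * log β⁻¹ + ((Q univ).toReal - 1) ≤ (shannonEntropy P).toReal := by
  have : IsFiniteMeasure Q := isFiniteMeasure_of_le P hQP
  have hQ := hasSum_toReal_measure_singleton Q
  have hP1 := hasSum_toReal_measure_singleton P
  rw [measure_univ, ENNReal.toReal_one] at hP1
  refine hasSum_le (fun i => ?_) ((hQ.mul_right _).add (hQ.sub hP1))
    (hasSum_negMulLog_toReal_shannonEntropy prob_le_one hP)
  exact mul_log_inv_add_sub_le_negMulLog ENNReal.toReal_nonneg
    (ENNReal.toReal_mono (measure_ne_top P _) (hQP _)) (toReal_measure_le_one prob_le_one _)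
    (hQβ i)

noncomputable def quantEntropy (μ : Measure ℝ) (ℓ : ℕ) : ℝ≥0∞ :=
  shannonEntropy (μ.map fun x => ⌊(ℓ : ℝ) * x⌋)

lemma measurable_floor_mul (c : ℝ) : Measurable fun x : ℝ => ⌊c * x⌋ :=
  (measurable_const_mul c).floor

lemma map_floor_mul_apply_univ (μ : Measure ℝ) (c : ℝ) :
    μ.map (fun x => ⌊c * x⌋) univ = μ univ := by
  rw [Measure.map_apply (measurable_floor_mul c) MeasurableSet.univ, preimage_univ]

lemma quantEntropy_one (μ : Measure ℝ) :
    quantEntropy μ 1 = shannonEntropy (μ.map fun x => ⌊x⌋) := by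
  simp [quantEntropy]

lemma quantEntropy_add_le (μ ν : Measure ℝ) [IsFiniteMeasure μ] [IsFiniteMeasure ν] (ℓ : ℕ) :
    quantEntropy (μ + ν) ℓ ≤ quantEntropy μ ℓ + quantEntropy ν ℓ := by
  rw [quantEntropy, Measure.map_add _ _ (measurable_floor_mul _)]
  exact shannonEntropy_add_le _ _

lemma quantEntropy_le_card {μ : Measure ℝ} {F : Finset ℝ} (hF : μ (↑F)ᶜ = 0) (ℓ : ℕ) :
    quantEntropy μ ℓ ≤ F.card := by
  classical
  refine (shannonEntropy_le_card (T := F.image fun x => ⌊(ℓ : ℝ) * x⌋) ?_).trans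
    (Nat.cast_le.2 Finset.card_image_le)
  rw [Measure.map_apply (measurable_floor_mul _) MeasurableSet.of_discrete]
  have hsub : (fun x => ⌊(ℓ : ℝ) * x⌋) ⁻¹' (↑(F.image fun x => ⌊(ℓ : ℝ) * x⌋))ᶜ ⊆ (↑F)ᶜ :=
    fun x hx hxF => hx (Finset.mem_coe.2 (Finset.mem_image_of_mem _ hxF))
  exact measure_mono_null hsub hF

lemma quantEntropy_le_add_log {μ : Measure ℝ} (hμ : μ univ ≤ 1) (ℓ : ℕ) [NeZero ℓ] :
    quantEntropy μ ℓ ≤ quantEntropy μ 1 + μ univ * ENNReal.ofReal (log ℓ) := by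
  have hmap : (μ.map fun x => ⌊(ℓ : ℝ) * x⌋).map (· / (ℓ : ℤ)) = μ.map fun x => ⌊x⌋ := by
    rw [Measure.map_map measurable_from_top (measurable_floor_mul _)]
    congr 1
    funext x
    simp [← Int.floor_div_natCast, mul_div_cancel_left₀ x (NeZero.ne (ℓ : ℝ))]
  have h := shannonEntropy_le_map_ediv_add ((map_floor_mul_apply_univ μ ℓ).trans_le hμ) ℓ
  rwa [hmap, map_floor_mul_apply_univ, ← quantEntropy_one] at h

lemma quantEntropy_le_of_le {μ p : Measure ℝ} [IsProbabilityMeasure p] (hμp : μ ≤ p)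
    (ℓ : ℕ) [NeZero ℓ] :
    quantEntropy μ ℓ ≤ quantEntropy p 1 + 1 + μ univ * ENNReal.ofReal (log ℓ) := by
  have hcoarse : quantEntropy μ 1 ≤ quantEntropy p 1 + 1 := by
    have h := shannonEntropy_le_add_of_le (Measure.map_mono hμp (measurable_floor_mul (1 : ℕ)))
      ((map_floor_mul_apply_univ p _).trans_le prob_le_one)
    rwa [map_floor_mul_apply_univ, measure_univ] at h
  calc quantEntropy μ ℓ ≤ quantEntropy μ 1 + μ univ * ENNReal.ofReal (log ℓ) :=
        quantEntropy_le_add_log ((hμp univ).trans prob_le_one) ℓ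
    _ ≤ _ := by gcongr

lemma volume_map_floor_mul_singleton (ℓ : ℕ) [NeZero ℓ] (i : ℤ) :
    volume.map (fun x : ℝ => ⌊(ℓ : ℝ) * x⌋) {i} = ENNReal.ofReal (ℓ : ℝ)⁻¹ := by
  have hℓ : (0 : ℝ) < ℓ := Nat.cast_pos.2 (Nat.pos_of_neZero ℓ)
  have hcell : (fun x : ℝ => ⌊(ℓ : ℝ) * x⌋) ⁻¹' {i} = Ico ((i : ℝ) / ℓ) ((i + 1) / ℓ) := by
    ext x
    simp only [mem_preimage, mem_singleton_iff, Int.floor_eq_iff, mem_Ico, div_le_iff₀ hℓ,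
      lt_div_iff₀ hℓ, mul_comm x]
  rw [Measure.map_apply (measurable_floor_mul _) (measurableSet_singleton i), hcell,
    Real.volume_Ico, ← sub_div, add_sub_cancel_left, one_div]

lemma tendsto_log_natCast_atTop : Tendsto (fun ℓ : ℕ => log ℓ) atTop atTop :=
  tendsto_log_atTop.comp tendsto_natCast_atTop_atTop

lemma tendsto_div_log_add (C a : ℝ) : Tendsto (fun ℓ : ℕ => C / log ℓ + a) atTop (𝓝 a) := by
  simpa using (tendsto_const_nhds.div_atTop tendsto_log_natCast_atTop).add
    (tendsto_const_nhds (x := a))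

section DivLog

variable {f : ℕ → ℝ} {C a : ℝ}

lemma eventually_div_log_le (h : ∀ᶠ ℓ : ℕ in atTop, f ℓ ≤ C + a * log ℓ) :
    ∀ᶠ ℓ : ℕ in atTop, f ℓ / log ℓ ≤ C / log ℓ + a := by
  filter_upwards [h, tendsto_log_natCast_atTop.eventually_gt_atTop 0] with ℓ hf hlog
  rw [div_add' _ _ _ hlog.ne', div_le_div_iff_of_pos_right hlog]
  linarith

lemma isBoundedUnder_le_div_log (h : ∀ᶠ ℓ : ℕ in atTop, f ℓ ≤ C + a * log ℓ) :
    IsBoundedUnder (· ≤ ·) atTop fun ℓ : ℕ => f ℓ / log ℓ :=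
  (tendsto_div_log_add C a).isBoundedUnder_le.mono_le (eventually_div_log_le h)

lemma isBoundedUnder_ge_div_log (hf : ∀ ℓ, 0 ≤ f ℓ) :
    IsBoundedUnder (· ≥ ·) atTop fun ℓ : ℕ => f ℓ / log ℓ :=
  isBoundedUnder_of_eventually_ge (a := 0) (Eventually.of_forall fun ℓ =>
    div_nonneg (hf ℓ) (log_natCast_nonneg ℓ))

lemma limsup_div_log_le (hf : ∀ ℓ, 0 ≤ f ℓ) (h : ∀ᶠ ℓ : ℕ in atTop, f ℓ ≤ C + a * log ℓ) :
    limsup (fun ℓ : ℕ => f ℓ / log ℓ) atTop ≤ a :=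
  (limsup_le_limsup (eventually_div_log_le h) (isBoundedUnder_ge_div_log hf).isCoboundedUnder_le
    (tendsto_div_log_add C a).isBoundedUnder_le).trans_eq (tendsto_div_log_add C a).limsup_eq

lemma le_liminf_div_log (h : ∀ᶠ ℓ : ℕ in atTop, a * log ℓ - C ≤ f ℓ)
    (hbdd : IsBoundedUnder (· ≤ ·) atTop fun ℓ : ℕ => f ℓ / log ℓ) :
    a ≤ liminf (fun ℓ : ℕ => f ℓ / log ℓ) atTop := by
  have hlim := tendsto_div_log_add (-C) a
  have hle : ∀ᶠ ℓ : ℕ in atTop, -C / log ℓ + a ≤ f ℓ / log ℓ := by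
    filter_upwards [h, tendsto_log_natCast_atTop.eventually_gt_atTop 0] with ℓ hf hlog
    rw [div_add' _ _ _ hlog.ne', div_le_div_iff_of_pos_right hlog]
    linarith
  exact hlim.liminf_eq.symm.trans_le
    (liminf_le_liminf hle hlim.isBoundedUnder_ge hbdd.isCoboundedUnder_ge)

end DivLog

section Bounds

variable {p : Measure ℝ} [IsProbabilityMeasure p]

lemma quantEntropy_le_self_add_log (ℓ : ℕ) [NeZero ℓ] :
    quantEntropy p ℓ ≤ quantEntropy p 1 + ENNReal.ofReal (log ℓ) := by
  simpa using quantEntropy_le_add_log (μ := p) prob_le_one ℓ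

lemma isBoundedUnder_le_quantEntropy_div_log (hp1 : quantEntropy p 1 ≠ ⊤) :
    IsBoundedUnder (· ≤ ·) atTop fun ℓ : ℕ => (quantEntropy p ℓ).toReal / log ℓ := by
  refine isBoundedUnder_le_div_log (C := (quantEntropy p 1).toReal) (a := 1) ?_
  filter_upwards [eventually_ge_atTop 1] with ℓ hℓ
  have : NeZero ℓ := ⟨by omega⟩
  refine ENNReal.toReal_le_of_le_ofReal (by positivity [log_natCast_nonneg ℓ]) ?_
  rw [one_mul, ENNReal.ofReal_add ENNReal.toReal_nonneg (log_natCast_nonneg ℓ),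
    ENNReal.ofReal_toReal hp1]
  exact quantEntropy_le_self_add_log ℓ

theorem limsup_quantEntropy_div_log_le_of_finset (hp1 : quantEntropy p 1 ≠ ⊤)
    {μ ν : Measure ℝ} (hp : p = μ + ν) {F : Finset ℝ} (hμF : μ (↑F)ᶜ = 0) {a : ℝ} (ha : 0 ≤ a)
    (hν : ν univ ≤ ENNReal.ofReal a) :
    limsup (fun ℓ : ℕ => (quantEntropy p ℓ).toReal / log ℓ) atTop ≤ a := by
  have hμp : μ ≤ p := hp ▸ Measure.le_add_right le_rfl
  have hνp : ν ≤ p := hp ▸ Measure.le_add_left le_rfl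
  have := isFiniteMeasure_of_le p hμp
  have := isFiniteMeasure_of_le p hνp
  refine limsup_div_log_le (fun _ => ENNReal.toReal_nonneg)
    (C := F.card + (quantEntropy p 1).toReal + 1) ?_
  filter_upwards [eventually_ge_atTop 1] with ℓ hℓ
  have : NeZero ℓ := ⟨by omega⟩
  have hlog := log_natCast_nonneg ℓ
  refine ENNReal.toReal_le_of_le_ofReal (by positivity) ?_
  calc quantEntropy p ℓ ≤ quantEntropy μ ℓ + quantEntropy ν ℓ := hp ▸ quantEntropy_add_le μ ν ℓ
    _ ≤ F.card + (quantEntropy p 1 + 1 + ENNReal.ofReal a * ENNReal.ofReal (log ℓ)) := by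
        gcongr
        · exact quantEntropy_le_card hμF ℓ
        · exact (quantEntropy_le_of_le hνp ℓ).trans (by gcongr)
    _ = ENNReal.ofReal (F.card + (quantEntropy p 1).toReal + 1 + a * log ℓ) := by
        rw [ENNReal.ofReal_add (by positivity) (by positivity), ENNReal.ofReal_add (by positivity)
          zero_le_one, ENNReal.ofReal_add (by positivity) ENNReal.toReal_nonneg,
          ENNReal.ofReal_mul ha, ENNReal.ofReal_natCast, ENNReal.ofReal_toReal hp1,
          ENNReal.ofReal_one, add_assoc, add_assoc, add_assoc]

theorem le_liminf_quantEntropy_div_log (hp1 : quantEntropy p 1 ≠ ⊤) {μ : Measure ℝ}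
    (hμp : μ ≤ p) {K : ℝ≥0} (hK : μ ≤ (K : ℝ≥0∞) • volume) :
    (μ univ).toReal ≤ liminf (fun ℓ : ℕ => (quantEntropy p ℓ).toReal / log ℓ) atTop := by
  set W := (μ univ).toReal
  -- cells get `μ`-mass at most `(K + 1) / ℓ`; with `K` itself, `K = 0` would hit `log 0 = 0`
  refine le_liminf_div_log (C := W * log (K + 1) + (1 - W)) ?_
    (isBoundedUnder_le_quantEntropy_div_log hp1)
  filter_upwards [eventually_ge_atTop 1] with ℓ hℓ
  have : NeZero ℓ := ⟨by omega⟩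
  have hℓpos : (0 : ℝ) < ℓ := by exact_mod_cast hℓ
  have hcell (i : ℤ) : ((μ.map fun x => ⌊(ℓ : ℝ) * x⌋) {i}).toReal ≤ (K + 1) / ℓ := by
    have h := Measure.map_mono hK (measurable_floor_mul ℓ) {i}
    rw [Measure.map_smul, Measure.smul_apply, volume_map_floor_mul_singleton, smul_eq_mul,
      ← ENNReal.ofReal_coe_nnreal, ← ENNReal.ofReal_mul K.coe_nonneg] at h
    exact ENNReal.toReal_le_of_le_ofReal (by positivity) (h.trans (ENNReal.ofReal_le_ofReal
      (by rw [← div_eq_mul_inv]; gcongr; linarith)))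
  have hp_ne_top : quantEntropy p ℓ ≠ ⊤ := ne_top_of_le_ne_top
    (ENNReal.add_ne_top.2 ⟨hp1, ENNReal.ofReal_ne_top⟩) (quantEntropy_le_self_add_log ℓ)
  have := Measure.isProbabilityMeasure_map (μ := p) (measurable_floor_mul ℓ).aemeasurable
  have h := mul_log_inv_add_sub_le_shannonEntropy hp_ne_top
    (Measure.map_mono hμp (measurable_floor_mul ℓ)) hcell
  rw [map_floor_mul_apply_univ, inv_div, log_div hℓpos.ne' (by positivity)] at h
  change W * (log ℓ - log (K + 1)) + (W - 1) ≤ (quantEntropy p ℓ).toReal at h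
  linarith

theorem limsup_quantEntropy_div_log_le_of_countable (hp1 : quantEntropy p 1 ≠ ⊤)
    {μ ν : Measure ℝ} (hp : p = μ + ν) {S : Set ℝ}
    (hS : S.Countable) (hμS : μ Sᶜ = 0) {a : ℝ} (ha : 0 ≤ a) (hν : ν univ ≤ ENNReal.ofReal a) :
    limsup (fun ℓ : ℕ => (quantEntropy p ℓ).toReal / log ℓ) atTop ≤ a := by
  refine le_of_forall_pos_le_add fun δ hδ => ?_
  have := isFiniteMeasure_of_le p (hp ▸ Measure.le_add_right le_rfl : μ ≤ p)
  obtain ⟨F, hF⟩ := exists_finset_measure_compl_lt hS hμS (ENNReal.ofReal_pos.2 hδ)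
  refine limsup_quantEntropy_div_log_le_of_finset hp1 (F := F) (μ := μ.restrict F)
    (ν := μ.restrict (↑F)ᶜ + ν) ?_ ?_ (by positivity) ?_
  · rw [hp, ← add_assoc, Measure.restrict_add_restrict_compl F.measurableSet]
  · rw [Measure.restrict_apply F.measurableSet.compl, compl_inter_self, measure_empty]
  · rw [Measure.add_apply, Measure.restrict_apply_univ, ENNReal.ofReal_add ha hδ.le, add_comm]
    gcongr

theorem le_liminf_quantEntropy_div_log_of_absolutelyContinuous (hp1 : quantEntropy p 1 ≠ ⊤)
    {ν : Measure ℝ} (hνp : ν ≤ p) (hν : ν ≪ volume) :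
    (ν univ).toReal ≤ liminf (fun ℓ : ℕ => (quantEntropy p ℓ).toReal / log ℓ) atTop := by
  have := isFiniteMeasure_of_le p hνp
  have hmass : Tendsto (fun n : ℕ => (ν.restrict {x | ν.rnDeriv volume x ≤ n} univ).toReal)
      atTop (𝓝 (ν univ).toReal) := by
    simpa [Function.comp_def] using (ENNReal.tendsto_toReal (measure_ne_top ν univ)).comp
      (tendsto_measure_setOf_rnDeriv_le hν)
  refine le_of_tendsto' hmass fun n => le_liminf_quantEntropy_div_log hp1
    (Measure.restrict_le_self.trans hνp) (K := n) ?_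
  simpa using restrict_setOf_rnDeriv_le_le_smul hν n

lemma infoDimLower_le_infoDimUpper (hp1 : quantEntropy p 1 ≠ ⊤) :
    infoDimLower p ≤ infoDimUpper p :=
  liminf_le_limsup (isBoundedUnder_le_quantEntropy_div_log hp1)
    (isBoundedUnder_ge_div_log fun _ => ENNReal.toReal_nonneg)

end Bounds

end DJM

theorem statement5_general (p : Measure ℝ) [IsProbabilityMeasure p]
    (hH : shannonEntropy (p.map (fun x : ℝ => ⌊x⌋)) ≠ ⊤)
    (ε : ℝ) (hε0 : 0 ≤ ε) :
    (∀ νd νt : Measure ℝ, IsProbabilityMeasure νd → IsProbabilityMeasure νt →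
      (∃ S : Set ℝ, S.Countable ∧ νd Sᶜ = 0) →
      p = ENNReal.ofReal (1 - ε) • νd + ENNReal.ofReal ε • νt →
      infoDimUpper p ≤ ε ∧
        (νt ≪ volume → infoDimLower p = ε ∧ infoDimUpper p = ε)) ∧
    (p {x : ℝ | x ≠ 0} ≤ ENNReal.ofReal ε → infoDimUpper p ≤ ε) := by
  have hp1 : quantEntropy p 1 ≠ ⊤ := by rwa [quantEntropy_one]
  refine ⟨fun νd νt _ _ ⟨S, hS, hνdS⟩ hp => ?_, fun hp0 => ?_⟩
  · have hupper : infoDimUpper p ≤ ε :=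
      limsup_quantEntropy_div_log_le_of_countable hp1 hp hS (by simp [hνdS]) hε0 (by simp)
    refine ⟨hupper, fun hac => ?_⟩
    have hlower : ε ≤ infoDimLower p := by
      have h := le_liminf_quantEntropy_div_log_of_absolutelyContinuous hp1
        (hp ▸ Measure.le_add_left le_rfl) (hac.smul_left (ENNReal.ofReal ε))
      rwa [Measure.smul_apply, measure_univ, smul_eq_mul, mul_one,
        ENNReal.toReal_ofReal hε0] at h
    have hLU := infoDimLower_le_infoDimUpper hp1
    exact ⟨le_antisymm (hLU.trans hupper) hlower, le_antisymm hupper (hlower.trans hLU)⟩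
  · refine limsup_quantEntropy_div_log_le_of_finset hp1
      (Measure.restrict_add_restrict_compl (measurableSet_singleton 0)).symm (F := {0}) ?_ hε0 ?_
    · simp
    · rw [Measure.restrict_apply_univ]
      exact hp0

/-- Proposition 1 of the paper. Let `p` be a probability measure on `ℝ`
with `H(⌊X⌋) < ∞`. If `p = (1-ε)ν_d + εν̃` with `ν_d` discrete, then `d̄(p) ≤ ε`; if
moreover `ν̃` is absolutely continuous w.r.t. Lebesgue measure, then `d̲(p) = d̄(p) = ε`.
In particular, if `P(X ≠ 0) ≤ ε` then `d̄(p) ≤ ε`. -/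
theorem statement5 (p : Measure ℝ) [IsProbabilityMeasure p]
    (hH : shannonEntropy (p.map (fun x : ℝ => ⌊x⌋)) ≠ ⊤)
    (ε : ℝ) (hε0 : 0 ≤ ε) (hε1 : ε ≤ 1) :
    (∀ νd νt : Measure ℝ, IsProbabilityMeasure νd → IsProbabilityMeasure νt →
      (∃ S : Set ℝ, S.Countable ∧ νd Sᶜ = 0) →
      p = ENNReal.ofReal (1 - ε) • νd + ENNReal.ofReal ε • νt →
      infoDimUpper p ≤ ε ∧
        (νt ≪ volume → infoDimLower p = ε ∧ infoDimUpper p = ε)) ∧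
    (p {x : ℝ | x ≠ 0} ≤ ENNReal.ofReal ε → infoDimUpper p ≤ ε) :=
  statement5_general p hH ε hε0
end

section
/- Let M > 0 and let p_X and p_X̃ be probability measures supported in [−M,M], with X ~ p_X and X̃ ~ p_X̃. Let η(y) = E[X·e^{−(X−y)²/2}]/E[e^{−(X−y)²/2}] be the posterior-mean (Bayes optimal) denoiser for estimating X from the observation y = X + Z with Z ~ N(0,1), and define η̃ analogously from p_X̃. Then for every y ∈ ℝ, |η(y) − η̃(y)| ≤ (M·(15 + 10·M·|y|)/E[e^{−X²/2}])·D_KS(p_X, p_X̃)·e^{2M|y|}. -/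
open MeasureTheory ProbabilityTheory Filter BoundedContinuousFunction
open scoped ENNReal NNReal

open DJM

/-!
Integration by parts against the distribution functions gives
`∫ g dp - ∫ g dp̃ = ∫_{-M}^{M} g' (F_p̃ - F_p)`, so the numerator `∫ a e^{-(y-a)²/2} dp(a)` and
the denominator `∫ e^{-(y-a)²/2} dp(a)` of `η(y)` each move by at most `D_KS(p, p̃)` times the
`L¹[-M, M]` norm of the derivative of their integrand. On `[-M, M]` the kernel
`e^{-(y-a)²/2}` lies between `e^{-M|y| - y²/2} e^{-a²/2}` and `e^{M|y| - y²/2} e^{-a²/2}`: the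
upper bound makes those norms explicit, the lower one bounds the denominator below by a
multiple of `E[e^{-X²/2}]`.
-/

open Set

theorem ae_mem_of_measure_eq_one {α : Type*} [MeasurableSpace α] {μ : Measure α}
    [IsProbabilityMeasure μ] {s : Set α} (hs : MeasurableSet s) (h : μ s = 1) :
    ∀ᵐ a ∂μ, a ∈ s :=
  mem_ae_iff.2 ((prob_compl_eq_zero_iff hs).2 h)

theorem Continuous.integrable_of_ae_mem_Icc {μ : Measure ℝ} [IsFiniteMeasure μ] {M : ℝ}
    (hμ : ∀ᵐ a ∂μ, a ∈ Icc (-M) M) {g : ℝ → ℝ} (hg : Continuous g) : Integrable g μ := by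
  simpa only [IntegrableOn, Measure.restrict_eq_self_of_ae_mem hμ] using
    hg.integrableOn_Icc (μ := μ) (a := -M) (b := M)

theorem integrableOn_mul_cdf (μ : Measure ℝ) {g : ℝ → ℝ} (hg : Continuous g) (a b : ℝ) :
    IntegrableOn (fun z => g z * cdf μ z) (Icc a b) :=
  hg.integrableOn_Icc.mul_bdd (cdf μ).mono.measurable.aestronglyMeasurable
    (ae_of_all _ fun z => by
      rw [Real.norm_eq_abs, abs_of_nonneg (cdf_nonneg μ z)]
      exact cdf_le_one μ z)

section CDFIntegrationByParts

variable {μ ν : Measure ℝ} [IsProbabilityMeasure μ] [IsProbabilityMeasure ν] {M : ℝ}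
  {g g' : ℝ → ℝ}

theorem integral_eq_sub_setIntegral_mul_cdf (hμ : ∀ᵐ a ∂μ, a ∈ Icc (-M) M)
    (hg : ∀ x, HasDerivAt g (g' x) x) (hg' : Continuous g') :
    ∫ a, g a ∂μ = g M - ∫ z in Icc (-M) M, g' z * cdf μ z := by
  set F : ℝ × ℝ → ℝ := {q | q.1 ≤ q.2}.indicator (fun q => g' q.2)
  have hF : Integrable F (μ.prod (volume.restrict (Icc (-M) M))) :=
    ((hg'.integrableOn_Icc).comp_snd μ).indicator
      (measurableSet_le measurable_fst measurable_snd)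
  -- `g a = g M - ∫_a^M g'`, written over the fixed interval `[-M, M]` so that Fubini applies
  have hslice : ∀ᵐ a ∂μ, g a = g M - ∫ z in Icc (-M) M, F (a, z) := by
    filter_upwards [hμ] with a ha
    have hF_eq : (fun z => F (a, z)) = (Ici a).indicator g' := by
      ext z; simp [F, Set.indicator_apply]
    have hIcc : Icc (-M) M ∩ Ici a = Icc a M := by
      ext z
      simp only [mem_inter_iff, mem_Icc, mem_Ici]
      exact ⟨fun h => ⟨h.2, h.1.2⟩, fun h => ⟨⟨ha.1.trans h.1, h.2⟩, h.1⟩⟩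
    rw [hF_eq, setIntegral_indicator measurableSet_Ici, hIcc,
      integral_Icc_eq_integral_Ioc, ← intervalIntegral.integral_of_le ha.2,
      intervalIntegral.integral_eq_sub_of_hasDerivAt (fun x _ => hg x)
        (hg'.intervalIntegrable _ _)]
    ring
  calc ∫ a, g a ∂μ = ∫ a, (g M - ∫ z in Icc (-M) M, F (a, z)) ∂μ := integral_congr_ae hslice
    _ = g M - ∫ a, (∫ z in Icc (-M) M, F (a, z)) ∂μ := by
      rw [integral_sub (integrable_const _) hF.integral_prod_left, integral_const,
        probReal_univ, one_smul]
    _ = g M - ∫ z in Icc (-M) M, ∫ a, F (a, z) ∂μ := by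
      rw [integral_integral_swap (f := fun a z => F (a, z)) hF]
    _ = g M - ∫ z in Icc (-M) M, g' z * cdf μ z := by
      congr 1
      refine integral_congr_ae (ae_of_all _ fun z => ?_)
      have hF_eq : (fun a => F (a, z)) = (Iic z).indicator fun _ => g' z := by
        ext a; simp [F, Set.indicator_apply]
      simp only [hF_eq, integral_indicator_const _ measurableSet_Iic, smul_eq_mul, cdf_eq_real,
        mul_comm]

theorem abs_integral_sub_integral_le_of_abs_cdf_sub_le (hμ : ∀ᵐ a ∂μ, a ∈ Icc (-M) M)
    (hν : ∀ᵐ a ∂ν, a ∈ Icc (-M) M) (hg : ∀ x, HasDerivAt g (g' x) x) (hg' : Continuous g')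
    {K : ℝ} (hK : ∀ z, |cdf μ z - cdf ν z| ≤ K) :
    |∫ a, g a ∂μ - ∫ a, g a ∂ν| ≤ K * ∫ z in Icc (-M) M, |g' z| := by
  rw [integral_eq_sub_setIntegral_mul_cdf hμ hg hg', integral_eq_sub_setIntegral_mul_cdf hν hg hg',
    sub_sub_sub_cancel_left,
    ← integral_sub (integrableOn_mul_cdf ν hg' _ _) (integrableOn_mul_cdf μ hg' _ _),
    ← integral_const_mul, ← Real.norm_eq_abs]
  refine norm_integral_le_of_norm_le ((hg'.abs.integrableOn_Icc (μ := volume)).const_mul K)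
    (ae_of_all _ fun z => ?_)
  rw [Real.norm_eq_abs, ← mul_sub, abs_mul, abs_sub_comm, mul_comm K]
  exact mul_le_mul_of_nonneg_left (hK z) (abs_nonneg _)

end CDFIntegrationByParts

theorem mul_le_mul_abs_of_abs_le {y z M : ℝ} (hz : |z| ≤ M) : y * z ≤ M * |y| := by
  calc y * z ≤ |y * z| := le_abs_self _
    _ = |y| * |z| := abs_mul y z
    _ ≤ M * |y| := by rw [mul_comm]; exact mul_le_mul_of_nonneg_right hz (abs_nonneg y)

theorem setIntegral_Icc_neg_const {M : ℝ} (hM : 0 ≤ M) (c : ℝ) :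
    ∫ _ in Icc (-M) M, c = 2 * M * c := by
  rw [setIntegral_const, Real.volume_real_Icc_of_le (by linarith), smul_eq_mul]
  ring

theorem sq_mul_exp_neg_sq_div_two_le (z : ℝ) : z ^ 2 * Real.exp (-z ^ 2 / 2) ≤ 2 := by
  have h := Real.add_one_le_exp (z ^ 2 / 2)
  have hinv : Real.exp (z ^ 2 / 2) * Real.exp (-z ^ 2 / 2) = 1 := by
    rw [← Real.exp_add]; ring_nf; exact Real.exp_zero
  nlinarith [Real.exp_pos (-z ^ 2 / 2)]

theorem hasDerivAt_exp_neg_sq_div_two (z : ℝ) :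
    HasDerivAt (fun z => Real.exp (-z ^ 2 / 2)) (-z * Real.exp (-z ^ 2 / 2)) z := by
  convert ((hasDerivAt_pow 2 z).fun_neg.div_const 2).exp using 1
  norm_num
  ring

theorem setIntegral_Icc_abs_mul_exp_neg_sq_div_two_le {M : ℝ} (hM : 0 ≤ M) :
    ∫ z in Icc (-M) M, |z| * Real.exp (-z ^ 2 / 2) ≤ 2 := by
  set f : ℝ → ℝ := fun z => |z| * Real.exp (-z ^ 2 / 2)
  have hf : Continuous f := by fun_prop
  have half : ∫ z in (0)..M, f z = 1 - Real.exp (-M ^ 2 / 2) := by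
    rw [intervalIntegral.integral_congr (g := fun z => -(-z * Real.exp (-z ^ 2 / 2)))
      (fun z hz => ?_), intervalIntegral.integral_eq_sub_of_hasDerivAt
      (fun z _ => (hasDerivAt_exp_neg_sq_div_two z).neg)
      ((by fun_prop : Continuous fun z : ℝ => -(-z * Real.exp (-z ^ 2 / 2))).intervalIntegrable
        _ _)]
    · simp; ring
    · rw [uIcc_of_le hM] at hz
      simp [f, abs_of_nonneg hz.1]
  have hsymm : ∫ z in (-M)..0, f z = ∫ z in (0)..M, f z := by
    simpa [f] using (intervalIntegral.integral_comp_neg (a := 0) (b := M) f).symm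
  rw [integral_Icc_eq_integral_Ioc, ← intervalIntegral.integral_of_le (by linarith),
    ← intervalIntegral.integral_add_adjacent_intervals (b := 0) (hf.intervalIntegrable _ _)
      (hf.intervalIntegrable _ _), hsymm, half]
  linarith [Real.exp_pos (-M ^ 2 / 2)]

namespace DJM

theorem ksDist_nonneg (μ ν : Measure ℝ) : 0 ≤ ksDist μ ν :=
  Real.iSup_nonneg fun _ => abs_nonneg _

theorem abs_cdf_sub_cdf_le_ksDist (μ ν : Measure ℝ) [IsProbabilityMeasure μ]
    [IsProbabilityMeasure ν] (z : ℝ) : |cdf μ z - cdf ν z| ≤ ksDist μ ν := by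
  have hbdd : BddAbove (range fun z => |cdf μ z - cdf ν z|) := by
    refine ⟨1, forall_mem_range.2 fun z => abs_sub_le_iff.2 ⟨?_, ?_⟩⟩ <;>
      linarith [cdf_nonneg μ z, cdf_le_one μ z, cdf_nonneg ν z, cdf_le_one ν z]
  simpa only [ksDist, cdf_eq_real, measureReal_def] using le_ciSup hbdd z

noncomputable def gaussKernel (y a : ℝ) : ℝ := Real.exp (-(y - a) ^ 2 / 2)

theorem postMean_one_eq (p : Measure ℝ) (y : ℝ) :
    postMean p 1 y = (∫ a, a * gaussKernel y a ∂p) / ∫ a, gaussKernel y a ∂p := by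
  simp only [postMean, gaussKernel, one_mul]

section GaussKernel

variable (y : ℝ)

theorem gaussKernel_pos (a : ℝ) : 0 < gaussKernel y a := Real.exp_pos _

theorem gaussKernel_le_one (a : ℝ) : gaussKernel y a ≤ 1 :=
  Real.exp_le_one_iff.2 (by nlinarith [sq_nonneg (y - a)])

@[fun_prop]
theorem continuous_gaussKernel : Continuous (gaussKernel y) := by
  unfold gaussKernel; fun_prop

theorem integrable_gaussKernel (μ : Measure ℝ) [IsFiniteMeasure μ] :
    Integrable (gaussKernel y) μ :=
  .of_bound (continuous_gaussKernel y).aestronglyMeasurable 1 (ae_of_all _ fun a => by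
    rw [Real.norm_of_nonneg (gaussKernel_pos y a).le]; exact gaussKernel_le_one y a)

theorem integral_gaussKernel_pos (μ : Measure ℝ) [IsFiniteMeasure μ] [NeZero μ] :
    0 < ∫ a, gaussKernel y a ∂μ :=
  integral_exp_pos (integrable_gaussKernel y μ)

theorem hasDerivAt_gaussKernel (a : ℝ) :
    HasDerivAt (gaussKernel y) ((y - a) * gaussKernel y a) a := by
  convert ((((hasDerivAt_id' a).const_sub y).fun_pow 2).fun_neg.div_const 2).exp using 1
  · rfl
  · norm_num [gaussKernel]
    ring

theorem hasDerivAt_mul_gaussKernel (a : ℝ) :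
    HasDerivAt (fun a => a * gaussKernel y a)
      (gaussKernel y a + a * ((y - a) * gaussKernel y a)) a := by
  simpa using (hasDerivAt_id' a).fun_mul (hasDerivAt_gaussKernel y a)

variable {y} {M z : ℝ}

theorem gaussKernel_le_mul_exp_neg_sq_div_two (hz : |z| ≤ M) :
    gaussKernel y z ≤ Real.exp (M * |y| - y ^ 2 / 2) * Real.exp (-z ^ 2 / 2) := by
  rw [gaussKernel, ← Real.exp_add, Real.exp_le_exp]
  linarith [mul_le_mul_abs_of_abs_le (y := y) hz]

theorem exp_neg_sq_div_two_le_mul_gaussKernel (hz : |z| ≤ M) :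
    Real.exp (-z ^ 2 / 2) ≤ Real.exp (M * |y| + y ^ 2 / 2) * gaussKernel y z := by
  rw [gaussKernel, ← Real.exp_add, Real.exp_le_exp]
  have h := mul_le_mul_abs_of_abs_le (y := -y) hz
  rw [abs_neg] at h
  linarith

end GaussKernel

theorem setIntegral_abs_deriv_gaussKernel_le {M : ℝ} (hM : 0 ≤ M) (y : ℝ) :
    ∫ z in Icc (-M) M, |(y - z) * gaussKernel y z|
      ≤ Real.exp (M * |y| - y ^ 2 / 2) * (2 * M * |y| + 2) := by
  set E := Real.exp (M * |y| - y ^ 2 / 2)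
  have hpt : ∀ z ∈ Icc (-M) M,
      |(y - z) * gaussKernel y z| ≤ E * |y| + E * (|z| * Real.exp (-z ^ 2 / 2)) := by
    intro z hz
    have he : Real.exp (-z ^ 2 / 2) ≤ 1 := Real.exp_le_one_iff.2 (by nlinarith [sq_nonneg z])
    rw [abs_mul, abs_of_pos (gaussKernel_pos y z)]
    calc |y - z| * gaussKernel y z ≤ (|y| + |z|) * (E * Real.exp (-z ^ 2 / 2)) :=
          mul_le_mul (abs_sub _ _) (gaussKernel_le_mul_exp_neg_sq_div_two (abs_le.2 hz))
            (gaussKernel_pos y z).le (by positivity)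
      _ ≤ E * |y| + E * (|z| * Real.exp (-z ^ 2 / 2)) := by
          nlinarith [mul_le_mul_of_nonneg_left he (by positivity : 0 ≤ E * |y|)]
  calc ∫ z in Icc (-M) M, |(y - z) * gaussKernel y z|
      ≤ ∫ z in Icc (-M) M, (E * |y| + E * (|z| * Real.exp (-z ^ 2 / 2))) :=
        setIntegral_mono_on (by fun_prop : Continuous _).integrableOn_Icc
          (by fun_prop : Continuous _).integrableOn_Icc measurableSet_Icc hpt
    _ = 2 * M * (E * |y|) + E * ∫ z in Icc (-M) M, |z| * Real.exp (-z ^ 2 / 2) := by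
        rw [integral_add continuous_const.integrableOn_Icc
          (by fun_prop : Continuous _).integrableOn_Icc, setIntegral_Icc_neg_const hM,
          integral_const_mul]
    _ ≤ E * (2 * M * |y| + 2) := by
        nlinarith [setIntegral_Icc_abs_mul_exp_neg_sq_div_two_le hM,
          Real.exp_pos (M * |y| - y ^ 2 / 2)]

theorem setIntegral_abs_deriv_mul_gaussKernel_le {M : ℝ} (hM : 0 ≤ M) (y : ℝ) :
    ∫ z in Icc (-M) M, |gaussKernel y z + z * ((y - z) * gaussKernel y z)|
      ≤ Real.exp (M * |y| - y ^ 2 / 2) * (6 * M + 2 * M ^ 2 * |y|) := by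
  set E := Real.exp (M * |y| - y ^ 2 / 2)
  have hpt : ∀ z ∈ Icc (-M) M,
      |gaussKernel y z + z * ((y - z) * gaussKernel y z)| ≤ E * (3 + M * |y|) := by
    intro z hz
    have hzM : |z| ≤ M := abs_le.2 hz
    have hk := gaussKernel_pos y z
    have he : Real.exp (-z ^ 2 / 2) ≤ 1 := Real.exp_le_one_iff.2 (by nlinarith [sq_nonneg z])
    calc |gaussKernel y z + z * ((y - z) * gaussKernel y z)|
        ≤ |gaussKernel y z| + |z * ((y - z) * gaussKernel y z)| := abs_add_le _ _
      _ = (1 + |z| * |y - z|) * gaussKernel y z := by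
          rw [abs_of_pos hk, abs_mul, abs_mul, abs_of_pos hk]; ring
      _ ≤ (1 + |z| * |y| + z ^ 2) * (E * Real.exp (-z ^ 2 / 2)) := by
          gcongr ?_ * ?_
          · nlinarith [abs_sub y z, abs_nonneg z, sq_abs z]
          · exact gaussKernel_le_mul_exp_neg_sq_div_two hzM
      _ = E * (Real.exp (-z ^ 2 / 2) + |z| * |y| * Real.exp (-z ^ 2 / 2)
            + z ^ 2 * Real.exp (-z ^ 2 / 2)) := by ring
      _ ≤ E * (3 + M * |y|) := by
          have hzy : |z| * |y| * Real.exp (-z ^ 2 / 2) ≤ M * |y| * 1 := by gcongr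
          nlinarith [sq_mul_exp_neg_sq_div_two_le z, Real.exp_pos (M * |y| - y ^ 2 / 2)]
  calc ∫ z in Icc (-M) M, |gaussKernel y z + z * ((y - z) * gaussKernel y z)|
      ≤ ∫ _ in Icc (-M) M, E * (3 + M * |y|) :=
        setIntegral_mono_on (by fun_prop : Continuous _).integrableOn_Icc
          continuous_const.integrableOn_Icc measurableSet_Icc hpt
    _ = E * (6 * M + 2 * M ^ 2 * |y|) := by rw [setIntegral_Icc_neg_const hM]; ring

theorem abs_div_sub_div_le {N D N' D' M : ℝ} (hD : 0 < D) (hD' : 0 < D')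
    (hN' : |N'| ≤ M * D') : |N / D - N' / D'| ≤ (|N - N'| + M * |D - D'|) / D := by
  have hq : |N' / D'| ≤ M := by rwa [abs_div, abs_of_pos hD', div_le_iff₀ hD']
  rw [le_div_iff₀ hD, ← abs_of_pos hD, ← abs_mul, abs_of_pos hD]
  calc |(N / D - N' / D') * D| = |(N - N') + N' / D' * (D' - D)| := by
        congr 1; field_simp; ring
    _ ≤ |N - N'| + |N' / D'| * |D' - D| := by rw [← abs_mul]; exact abs_add_le _ _
    _ ≤ |N - N'| + M * |D - D'| := by rw [abs_sub_comm D']; gcongr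

section PosteriorMean

variable {μ ν : Measure ℝ} {M : ℝ}

theorem integral_exp_neg_sq_div_two_le_mul_integral_gaussKernel [IsFiniteMeasure μ]
    (hμ : ∀ᵐ a ∂μ, a ∈ Icc (-M) M) (y : ℝ) :
    ∫ x, Real.exp (-x ^ 2 / 2) ∂μ
      ≤ Real.exp (M * |y| + y ^ 2 / 2) * ∫ a, gaussKernel y a ∂μ := by
  rw [← integral_const_mul]
  exact integral_mono_ae ((by fun_prop : Continuous _).integrable_of_ae_mem_Icc hμ)
    ((integrable_gaussKernel y μ).const_mul _)
    (hμ.mono fun z hz => exp_neg_sq_div_two_le_mul_gaussKernel (abs_le.2 hz))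

theorem abs_integral_mul_gaussKernel_le [IsFiniteMeasure μ] (hμ : ∀ᵐ a ∂μ, a ∈ Icc (-M) M)
    (y : ℝ) : |∫ a, a * gaussKernel y a ∂μ| ≤ M * ∫ a, gaussKernel y a ∂μ := by
  rw [← integral_const_mul, ← Real.norm_eq_abs]
  refine norm_integral_le_of_norm_le ((integrable_gaussKernel y μ).const_mul M)
    (hμ.mono fun a ha => ?_)
  rw [norm_mul, Real.norm_eq_abs, Real.norm_of_nonneg (gaussKernel_pos y a).le]
  exact mul_le_mul_of_nonneg_right (abs_le.2 ha) (gaussKernel_pos y a).le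

theorem abs_postMean_one_sub_le [IsProbabilityMeasure μ] [IsProbabilityMeasure ν]
    (hM : 0 ≤ M) (hμ : ∀ᵐ a ∂μ, a ∈ Icc (-M) M) (hν : ∀ᵐ a ∂ν, a ∈ Icc (-M) M) (y : ℝ) :
    |postMean μ 1 y - postMean ν 1 y|
      ≤ ksDist μ ν * Real.exp (M * |y| - y ^ 2 / 2) * (8 * M + 4 * M ^ 2 * |y|)
          / ∫ a, gaussKernel y a ∂μ := by
  have hK := abs_cdf_sub_cdf_le_ksDist μ ν
  have hK0 := ksDist_nonneg μ ν
  have hD := (abs_integral_sub_integral_le_of_abs_cdf_sub_le hμ hν (hasDerivAt_gaussKernel y)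
    (by fun_prop) hK).trans
      (mul_le_mul_of_nonneg_left (setIntegral_abs_deriv_gaussKernel_le hM y) hK0)
  have hN := (abs_integral_sub_integral_le_of_abs_cdf_sub_le hμ hν (hasDerivAt_mul_gaussKernel y)
    (by fun_prop) hK).trans
      (mul_le_mul_of_nonneg_left (setIntegral_abs_deriv_mul_gaussKernel_le hM y) hK0)
  have hμ₀ := integral_gaussKernel_pos y μ
  rw [postMean_one_eq, postMean_one_eq]
  calc _ ≤ _ := abs_div_sub_div_le hμ₀ (integral_gaussKernel_pos y ν)
        (abs_integral_mul_gaussKernel_le hν y)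
    _ ≤ _ := by
        gcongr
        linarith [mul_le_mul_of_nonneg_left hD hM]

end PosteriorMean

end DJM

/-- Lemma from Appendix A of the paper. For priors `p, p̃` supported in
`[-M, M]`, the Bayes optimal denoisers `η, η̃` in unit Gaussian noise satisfy
`|η(y) - η̃(y)| ≤ (M(15 + 10M|y|)/E[e^{-X²/2}]) · D_KS(p, p̃) · e^{2M|y|}`. -/
theorem statement19 (M : ℝ) (hM : 0 < M) (p pt : Measure ℝ)
    [IsProbabilityMeasure p] [IsProbabilityMeasure pt]
    (hp : p (Set.Icc (-M) M) = 1) (hpt : pt (Set.Icc (-M) M) = 1) (y : ℝ) :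
    |postMean p 1 y - postMean pt 1 y|
      ≤ M * (15 + 10 * M * |y|) / (∫ x, Real.exp (-x ^ 2 / 2) ∂p) *
          ksDist p pt * Real.exp (2 * M * |y|) := by
  have hμ := ae_mem_of_measure_eq_one measurableSet_Icc hp
  have hZ : 0 < ∫ x, Real.exp (-x ^ 2 / 2) ∂p :=
    integral_exp_pos ((by fun_prop : Continuous _).integrable_of_ae_mem_Icc hμ)
  have hZD := integral_exp_neg_sq_div_two_le_mul_integral_gaussKernel hμ y
  have hK0 := ksDist_nonneg p pt
  have hA : 0 ≤ ksDist p pt * Real.exp (M * |y| - y ^ 2 / 2) * (8 * M + 4 * M ^ 2 * |y|) := by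
    positivity
  have hEG : Real.exp (M * |y| - y ^ 2 / 2) * Real.exp (M * |y| + y ^ 2 / 2)
      = Real.exp (2 * M * |y|) := by rw [← Real.exp_add]; ring_nf
  calc _ ≤ _ := abs_postMean_one_sub_le hM.le hμ (ae_mem_of_measure_eq_one measurableSet_Icc hpt) y
    _ ≤ ksDist p pt * Real.exp (M * |y| - y ^ 2 / 2) * (8 * M + 4 * M ^ 2 * |y|)
          * Real.exp (M * |y| + y ^ 2 / 2) / ∫ x, Real.exp (-x ^ 2 / 2) ∂p := by
        rw [div_le_div_iff₀ (integral_gaussKernel_pos y p) hZ]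
        linarith [mul_le_mul_of_nonneg_left hZD hA]
    _ = ksDist p pt * (8 * M + 4 * M ^ 2 * |y|) * Real.exp (2 * M * |y|)
          / ∫ x, Real.exp (-x ^ 2 / 2) ∂p := by rw [← hEG]; ring
    _ ≤ _ := by
        rw [div_mul_eq_mul_div, div_mul_eq_mul_div, mul_comm (M * _)]
        gcongr
        nlinarith [mul_nonneg (sq_nonneg M) (abs_nonneg y)]
end
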